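/- Let W be an m × n real matrix and let r ≥ min(m,n). Then the infimum over all factorizations W = U·V with U of size m × r and V of size r × n of the quantity (1/2)(‖U‖_F² + ‖V‖_F²) equals ‖W‖_T, and this infimum is attained. -/

import Mathlib

open Matrix BigOperators

/-- The Frobenius norm of a real matrix. -/
noncomputable def frobeniusNorm {m n : ℕ} (A : Matrix (Fin m) (Fin n) ℝ) : ℝ :=
  Real.sqrt (∑ i, ∑ j, (A i j) ^ 2)

/-- The full list of `n` singular values of an `m × n` real matrix `W`, namely the
nonnegative square roots of the eigenvalues of `Wᵀ * W`. (At most `min m n` of these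
are nonzero.) -/
noncomputable def singularValuesFull {m n : ℕ} (W : Matrix (Fin m) (Fin n) ℝ) :
    Fin n → ℝ :=
  fun i => Real.sqrt ((Matrix.isHermitian_conjTranspose_mul_self W).eigenvalues i)

/-- The trace norm (nuclear norm) of a real matrix: the sum of its singular values. -/
noncomputable def traceNorm {m n : ℕ} (W : Matrix (Fin m) (Fin n) ℝ) : ℝ :=
  ∑ i, singularValuesFull W i

/-- `σ : Fin (min m n) → ℝ` is "the vector of singular values" of `W` when its entries
are nonnegative and, after padding with `n - min m n` zeros, it agrees (as a multiset)
with the nonnegative square roots of the eigenvalues of `Wᵀ * W`. -/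
def IsSingularValueVector {m n : ℕ} (W : Matrix (Fin m) (Fin n) ℝ)
    (σ : Fin (min m n) → ℝ) : Prop :=
  (∀ i, 0 ≤ σ i) ∧
    Multiset.map σ Finset.univ.val + Multiset.replicate (n - min m n) 0
      = Multiset.map (singularValuesFull W) Finset.univ.val

/-!
Choose an orthogonal `Q` with `(W Q)ᵀ (W Q) = diag σ²`, `σ` the singular values. Since
`W = U V ↔ W Q = U (V Q)` and `‖V Q‖ = ‖V‖`, it suffices to treat a matrix `A` whose columns are
orthogonal of lengths `σ j`.

Lower bound: `M = A diag σ⁻¹` is a partial isometry, so `M Mᵀ` is an orthogonal projection. If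
`A = U V` then `∑ σ = tr (Mᵀ U V) = ⟪Uᵀ M, V⟫ ≤ (‖Uᵀ M‖² + ‖V‖²) / 2 ≤ (‖U‖² + ‖V‖²) / 2`.

Attainment: `A = (A diag σ^(-1/2) P) (Pᵀ diag σ^(1/2))`, where `P Pᵀ` is the diagonal indicator of
`σ j ≠ 0`; such `P` with `r` columns exists because `rank A = #{j | σ j ≠ 0} ≤ r`.
-/

namespace Matrix

variable {ι κ ρ : Type*} [Fintype ι] [Fintype κ] [Fintype ρ]

theorem trace_transpose_mul_self_eq_sum_sq (A : Matrix ι κ ℝ) :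
    (Aᵀ * A).trace = ∑ i, ∑ j, A i j ^ 2 := by
  rw [trace, Finset.sum_comm]
  simp [mul_apply, sq]

theorem trace_transpose_mul_self_nonneg (A : Matrix ι κ ℝ) : 0 ≤ (Aᵀ * A).trace := by
  rw [trace_transpose_mul_self_eq_sum_sq]
  positivity

theorem trace_transpose_mul_le (A B : Matrix ι κ ℝ) :
    (Aᵀ * B).trace ≤ ((Aᵀ * A).trace + (Bᵀ * B).trace) / 2 := by
  have h := trace_transpose_mul_self_nonneg (A - B)
  have hBA : (Bᵀ * A).trace = (Aᵀ * B).trace := by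
    rw [← trace_transpose, transpose_mul, transpose_transpose]
  rw [transpose_sub, Matrix.sub_mul, Matrix.mul_sub, Matrix.mul_sub, trace_sub, trace_sub,
    trace_sub, hBA] at h
  linarith

theorem trace_transpose_mul_self_mul (U : Matrix ι κ ℝ) (E : Matrix κ ρ ℝ) :
    ((U * E)ᵀ * (U * E)).trace = (Uᵀ * U * (E * Eᵀ)).trace := by
  rw [transpose_mul, Matrix.mul_assoc, trace_mul_comm]
  simp only [Matrix.mul_assoc]

theorem trace_transpose_mul_mul_le_of_isSymm_of_isIdempotentElem (U : Matrix ι κ ℝ)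
    {P : Matrix ι ι ℝ} (hPt : P.IsSymm) (hPP : IsIdempotentElem P) :
    (Uᵀ * P * U).trace ≤ (Uᵀ * U).trace := by
  have hres := trace_transpose_mul_self_nonneg (U - P * U)
  have hexpand : (U - P * U)ᵀ * (U - P * U) = Uᵀ * U - Uᵀ * P * U := by
    rw [transpose_sub, transpose_mul, hPt.eq, Matrix.sub_mul, Matrix.mul_sub, Matrix.mul_sub,
      Matrix.mul_assoc Uᵀ P (P * U), ← Matrix.mul_assoc P P, hPP.eq, ← Matrix.mul_assoc]
    abel
  rw [hexpand, trace_sub] at hres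
  linarith

theorem exists_mul_transpose_eq_diagonal_indicator [DecidableEq κ] [DecidableEq ρ]
    (p : κ → Prop) [DecidablePred p] (hp : Fintype.card {j // p j} ≤ Fintype.card ρ) :
    ∃ P : Matrix κ ρ ℝ, P * Pᵀ = diagonal (fun j => if p j then 1 else 0) := by
  obtain ⟨ψ⟩ := Function.Embedding.nonempty_of_card_le hp
  refine ⟨of fun j k => if h : p j then (if ψ ⟨j, h⟩ = k then 1 else 0) else 0, ?_⟩
  ext j j'
  rcases eq_or_ne j j' with rfl | hne
  · by_cases hj : p j <;> simp [mul_apply, hj]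
  · by_cases hj : p j <;> by_cases hj' : p j' <;> simp [mul_apply, hj, hj', hne]

section OrthogonalColumns

variable [DecidableEq κ] {A : Matrix ι κ ℝ} {σ : κ → ℝ}

theorem sum_le_of_transpose_mul_self_eq_diagonal (hA : Aᵀ * A = diagonal (fun j => σ j ^ 2))
    {U : Matrix ι ρ ℝ} {V : Matrix ρ κ ℝ} (hUV : A = U * V) :
    ∑ j, σ j ≤ ((Uᵀ * U).trace + (Vᵀ * V).trace) / 2 := by
  -- `0⁻¹ = 0` makes the columns of `M` with `σ j = 0` vanish, so `M` is a partial isometry.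
  obtain ⟨M, hM⟩ : ∃ M, M = A * diagonal σ⁻¹ := ⟨_, rfl⟩
  have hMA : Mᵀ * A = diagonal σ := by
    rw [hM, transpose_mul, diagonal_transpose, Matrix.mul_assoc, hA, diagonal_mul_diagonal]
    congr 1; ext j
    rw [Pi.inv_apply, sq, ← mul_assoc, inv_mul_mul_self]
  have hMtM : Mᵀ * M = diagonal (fun j => σ j * (σ j)⁻¹) := by
    rw [← diagonal_mul_diagonal, ← hMA, Matrix.mul_assoc, hM]
    rfl
  have hMM : M * Mᵀ * M = M := by
    rw [Matrix.mul_assoc, hMtM, hM, Matrix.mul_assoc, diagonal_mul_diagonal]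
    congr 2; ext j
    rcases eq_or_ne (σ j) 0 with h | h <;> simp [h]
  have hproj : IsIdempotentElem (M * Mᵀ) := by
    rw [IsIdempotentElem, ← Matrix.mul_assoc, hMM]
  have hcontract : ((Uᵀ * M)ᵀ * (Uᵀ * M)).trace ≤ (Uᵀ * U).trace := by
    have h := trace_transpose_mul_mul_le_of_isSymm_of_isIdempotentElem U
      (transpose_mul M Mᵀ) hproj
    rw [trace_transpose_mul_self_mul, transpose_transpose, Matrix.mul_assoc, trace_mul_comm]
    simpa only [Matrix.mul_assoc] using h
  calc ∑ j, σ j = (Mᵀ * A).trace := by rw [hMA, trace_diagonal]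
    _ = ((Uᵀ * M)ᵀ * V).trace := by rw [hUV, transpose_mul, transpose_transpose, Matrix.mul_assoc]
    _ ≤ (((Uᵀ * M)ᵀ * (Uᵀ * M)).trace + (Vᵀ * V).trace) / 2 := trace_transpose_mul_le _ _
    _ ≤ ((Uᵀ * U).trace + (Vᵀ * V).trace) / 2 := by linarith

theorem exists_eq_mul_trace_eq_sum_of_transpose_mul_self_eq_diagonal [DecidableEq ρ]
    (hA : Aᵀ * A = diagonal (fun j => σ j ^ 2)) (hσ : ∀ j, 0 ≤ σ j)
    (hrank : A.rank ≤ Fintype.card ρ) :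
    ∃ (U : Matrix ι ρ ℝ) (V : Matrix ρ κ ℝ),
      A = U * V ∧ (Uᵀ * U).trace = ∑ j, σ j ∧ (Vᵀ * V).trace = ∑ j, σ j := by
  have hcol : ∀ i j, σ j = 0 → A i j = 0 := by
    intro i j hj
    have h := congr_fun (congr_fun hA j) j
    simp only [mul_apply, transpose_apply, diagonal_apply_eq, hj, ne_eq, OfNat.ofNat_ne_zero,
      not_false_eq_true, zero_pow] at h
    exact mul_self_eq_zero.1 <|
      (Finset.sum_eq_zero_iff_of_nonneg fun i _ => mul_self_nonneg (A i j)).1 h i (Finset.mem_univ i)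
  have hcard : Fintype.card {j // σ j ≠ 0} ≤ Fintype.card ρ := by
    rw [← rank_transpose_mul_self, hA, rank_diagonal] at hrank
    simpa using hrank
  obtain ⟨P, hP⟩ := exists_mul_transpose_eq_diagonal_indicator (fun j => σ j ≠ 0) hcard
  have hsqrt : ∀ j, σ j ≠ 0 → √(σ j) ≠ 0 ∧ √(σ j) ^ 2 = σ j := fun j hj =>
    ⟨Real.sqrt_ne_zero'.2 ((hσ j).lt_of_ne' hj), Real.sq_sqrt (hσ j)⟩
  refine ⟨A * diagonal (fun j => (√(σ j))⁻¹) * P, Pᵀ * diagonal (fun j => √(σ j)), ?_, ?_, ?_⟩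
  · rw [Matrix.mul_assoc, Matrix.mul_assoc, ← Matrix.mul_assoc P, hP, diagonal_mul_diagonal,
      diagonal_mul_diagonal]
    ext i j
    rw [mul_diagonal]
    rcases eq_or_ne (σ j) 0 with h | h
    · simp [h, hcol i j h]
    · simp [h, (hsqrt j h).1]
  · rw [trace_transpose_mul_self_mul, transpose_mul, diagonal_transpose]
    simp only [Matrix.mul_assoc]
    rw [← Matrix.mul_assoc Aᵀ, hA, hP, diagonal_mul_diagonal, diagonal_mul_diagonal,
      diagonal_mul_diagonal, trace_diagonal]
    refine Finset.sum_congr rfl fun j _ => ?_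
    rcases eq_or_ne (σ j) 0 with h | h
    · simp [h]
    · obtain ⟨h0, h2⟩ := hsqrt j h
      simp only [h, ne_eq, not_false_eq_true, if_true, mul_one]
      field_simp
      exact h2.symm
  · rw [transpose_mul, diagonal_transpose, transpose_transpose, Matrix.mul_assoc,
      ← Matrix.mul_assoc P, hP, diagonal_mul_diagonal, diagonal_mul_diagonal, trace_diagonal]
    refine Finset.sum_congr rfl fun j _ => ?_
    rcases eq_or_ne (σ j) 0 with h | h
    · simp [h]
    · simp [h, ← sq, (hsqrt j h).2]

end OrthogonalColumns

end Matrix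

theorem frobeniusNorm_sq {m n : ℕ} (A : Matrix (Fin m) (Fin n) ℝ) :
    frobeniusNorm A ^ 2 = (Aᵀ * A).trace := by
  rw [frobeniusNorm, Real.sq_sqrt (by positivity), trace_transpose_mul_self_eq_sum_sq]

theorem exists_orthogonal_transpose_mul_self_eq_diagonal_singularValuesFull_sq {m n : ℕ}
    (W : Matrix (Fin m) (Fin n) ℝ) :
    ∃ Q : Matrix (Fin n) (Fin n) ℝ,
      Q * Qᵀ = 1 ∧ (W * Q)ᵀ * (W * Q) = diagonal (fun j => singularValuesFull W j ^ 2) := by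
  have hH := isHermitian_conjTranspose_mul_self W
  have hstar : star (hH.eigenvectorUnitary : Matrix (Fin n) (Fin n) ℝ) =
      (hH.eigenvectorUnitary : Matrix (Fin n) (Fin n) ℝ)ᵀ := by
    rw [star_eq_conjTranspose, conjTranspose_eq_transpose_of_trivial]
  refine ⟨hH.eigenvectorUnitary, by rw [← hstar]; simp, ?_⟩
  have hdiag := hH.conjStarAlgAut_star_eigenvectorUnitary
  rw [Unitary.conjStarAlgAut_star_apply, hstar] at hdiag
  rw [transpose_mul, ← conjTranspose_eq_transpose_of_trivial W, Matrix.mul_assoc,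
    ← Matrix.mul_assoc Wᴴ, ← Matrix.mul_assoc, hdiag]
  congr 1; ext j
  exact (Real.sq_sqrt (eigenvalues_conjTranspose_mul_self_nonneg W j)).symm

theorem trace_norm_is_least_over_rank_r_factorizations {m n r : ℕ}
    (hr : min m n ≤ r) (W : Matrix (Fin m) (Fin n) ℝ) :
    IsLeast {x : ℝ | ∃ (U : Matrix (Fin m) (Fin r) ℝ)
        (V : Matrix (Fin r) (Fin n) ℝ), W = U * V ∧
        x = (1 / 2) * (frobeniusNorm U ^ 2 + frobeniusNorm V ^ 2)}
      (traceNorm W) := by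
  obtain ⟨Q, hQ, hWQ⟩ := exists_orthogonal_transpose_mul_self_eq_diagonal_singularValuesFull_sq W
  constructor
  · have hrank : (W * Q).rank ≤ Fintype.card (Fin r) := by
      rw [Fintype.card_fin]
      exact (rank_mul_le_left W Q).trans ((le_min W.rank_le_height W.rank_le_width).trans hr)
    obtain ⟨U, V, hUV, hU, hV⟩ := exists_eq_mul_trace_eq_sum_of_transpose_mul_self_eq_diagonal
      hWQ (fun j => Real.sqrt_nonneg _) hrank
    have hQt : Qᵀ * Qᵀᵀ = 1 := by rw [transpose_transpose, mul_eq_one_comm, hQ]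
    refine ⟨U, V * Qᵀ, ?_, ?_⟩
    · rw [← Matrix.mul_assoc, ← hUV, Matrix.mul_assoc, hQ, Matrix.mul_one]
    · rw [frobeniusNorm_sq, frobeniusNorm_sq, trace_transpose_mul_self_mul, hQt, Matrix.mul_one,
        hU, hV, traceNorm]
      ring
  · rintro x ⟨U, V, hUV, rfl⟩
    have h := sum_le_of_transpose_mul_self_eq_diagonal hWQ (U := U) (V := V * Q)
      (by rw [hUV, Matrix.mul_assoc])
    rw [trace_transpose_mul_self_mul, hQ, Matrix.mul_one] at h
    rw [frobeniusNorm_sq, frobeniusNorm_sq, traceNorm]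
    linarith
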